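/- Existence and uniqueness of the canonical decomposition: let M be a VO_n-structure, let A be a finite subset of the disjoint union of the sorts of M, and let E ⊆ M₀ be a basic-interval combination presented over A. Then E admits a canonical decomposition E = ⋃_{j∈B} I_j ∪ E₀; the finite endpoints of the intervals defining the multi-intervals I_j lie in ⟨A⟩; and the canonical decomposition is unique, i.e., if ⋃_{j∈B} I_j ∪ E₀ and ⋃_{k∈B′} I′_k ∪ E′₀ are both canonical decompositions of E, then E₀ = E′₀ and {I_j : j ∈ B} = {I′_k : k ∈ B′}. -/

import Mathlib

universe u

/-- A `VO n`-structure (for `n ≥ 1`): a sort `M0` with a distinguished element `0`, sorts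
`M i` (`i ∈ {1,…,n}`, here indexed by `Fin n`) each carrying a dense linear order without
endpoints, and injective maps `f i : M0 → M i` whose images are dense and codense in `M i`,
such that any system of nonempty open intervals (one in each sort `M i`) can be
simultaneously hit by the image of a single point of `M0`. -/
structure VO (n : ℕ) (M0 : Type u) (M : Fin n → Type u) [∀ i, LinearOrder (M i)] where
  /-- the distinguished element `0` of the sort `M0` -/
  zero : M0
  /-- the maps `fᵢ : M₀ → Mᵢ` -/
  f : ∀ i, M0 → M i
  f_inj : ∀ i, Function.Injective (f i)
  /-- each `<ᵢ` is a dense order -/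
  lt_dense : ∀ (i) (a b : M i), a < b → ∃ c, a < c ∧ c < b
  /-- no greatest element -/
  no_top : ∀ (i) (a : M i), ∃ b, a < b
  /-- no least element -/
  no_bot : ∀ (i) (a : M i), ∃ b, b < a
  /-- `fᵢ(M₀)` is `<ᵢ`-dense in `Mᵢ` -/
  image_dense : ∀ (i) (a b : M i), a < b → ∃ x : M0, a < f i x ∧ f i x < b
  /-- `fᵢ(M₀)` is `<ᵢ`-codense in `Mᵢ` -/
  image_codense : ∀ (i) (a b : M i), a < b → ∃ y : M i, a < y ∧ y < b ∧ y ∉ Set.range (f i)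
  /-- simultaneous density: axiom 5 of `VO_n` -/
  sim_dense : ∀ a b : (∀ i, M i), (∀ i, a i < b i) →
    ∃ x : M0, ∀ i, a i < f i x ∧ f i x < b i

variable {n : ℕ} {M0 : Type u} {M : Fin n → Type u} [∀ i, LinearOrder (M i)]

open Classical in
/-- The map `gᵢ : Mᵢ → M₀`, the inverse of `fᵢ` on its image and `0` elsewhere. -/
noncomputable def VO.g (V : VO n M0 M) (i : Fin n) (y : M i) : M0 :=
  if h : ∃ x, V.f i x = y then h.choose else V.zero

/-- The substructure `⟨A⟩` generated by a subset `A` of the disjoint union of the sorts: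
the smallest subset containing `A ∪ {0}` and closed under all the maps `fᵢ` and `gᵢ`. -/
inductive VO.gen (V : VO n M0 M) (A : Set (M0 ⊕ Sigma M)) : (M0 ⊕ Sigma M) → Prop
  | mem (x : M0 ⊕ Sigma M) (hx : x ∈ A) : VO.gen V A x
  | zero : VO.gen V A (Sum.inl V.zero)
  | fcl (i : Fin n) (x : M0) (hx : VO.gen V A (Sum.inl x)) :
      VO.gen V A (Sum.inr ⟨i, V.f i x⟩)
  | gcl (i : Fin n) (y : M i) (hy : VO.gen V A (Sum.inr ⟨i, y⟩)) :
      VO.gen V A (Sum.inl (V.g i y))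

/-- `I` is an open interval of the linear order `α` (allowing `±∞` as endpoints). -/
def IsOpenInterval {α : Type*} [LinearOrder α] (I : Set α) : Prop :=
  (∃ a b : α, I = Set.Ioo a b) ∨ (∃ a : α, I = Set.Ioi a) ∨ (∃ b : α, I = Set.Iio b) ∨
    I = Set.univ

/-- `I` is an open interval of `α` all of whose finite endpoints lie in `S`. -/
def EndpointsIn {α : Type*} [LinearOrder α] (I : Set α) (S : Set α) : Prop :=
  (∃ a ∈ S, ∃ b ∈ S, I = Set.Ioo a b) ∨ (∃ a ∈ S, I = Set.Ioi a) ∨ (∃ b ∈ S, I = Set.Iio b) ∨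
    I = Set.univ

/-- A multi-interval: a subset of `M₀` of the form `⋂ i, fᵢ⁻¹(Iⁱ)` where each `Iⁱ` is a
nonempty open interval of `Mᵢ`. -/
def VO.IsMultiInterval (V : VO n M0 M) (S : Set M0) : Prop :=
  ∃ I : ∀ i, Set (M i), (∀ i, IsOpenInterval (I i) ∧ (I i).Nonempty) ∧
    S = ⋂ i, V.f i ⁻¹' I i

/-- `E ⊆ M₀` is multi-open: every point of `E` lies in a multi-interval contained in `E`. -/
def VO.MultiOpen (V : VO n M0 M) (E : Set M0) : Prop :=
  ∀ e ∈ E, ∃ S : Set M0, V.IsMultiInterval S ∧ e ∈ S ∧ S ⊆ E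

/-- `I` is the maximal multi-interval in `E` containing `e`, recorded componentwise:
`e ∈ ⋂ i, fᵢ⁻¹(I i) ⊆ E`, each `I i` is an open interval, and for each sort `m`, `I m` is the
largest open interval `X` with `fₘ(e) ∈ X` for which there exist open intervals `J j` (`j > m`)
containing `f j e` with `⋂_{l<m} fₗ⁻¹(I l) ∩ fₘ⁻¹(X) ∩ ⋂_{j>m} fⱼ⁻¹(J j) ⊆ E`. -/
def VO.IsMaxMultiInterval (V : VO n M0 M) (E : Set M0) (e : M0) (I : ∀ i, Set (M i)) : Prop :=
  (∀ i, IsOpenInterval (I i)) ∧ (∀ i, V.f i e ∈ I i) ∧ (⋂ i, V.f i ⁻¹' I i) ⊆ E ∧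
  ∀ (m : Fin n) (X : Set (M m)), IsOpenInterval X → V.f m e ∈ X →
    (∃ J : ∀ j, Set (M j),
      (∀ j, m < j → IsOpenInterval (J j) ∧ V.f j e ∈ J j) ∧
      ((⋂ l, ⋂ _ : l < m, V.f l ⁻¹' I l) ∩ V.f m ⁻¹' X ∩
        ⋂ j, ⋂ _ : m < j, V.f j ⁻¹' J j) ⊆ E) →
    X ⊆ I m


/-- A basic-interval combination presented over `A`: a member of the Boolean algebra of
subsets of `M₀` generated by the singletons `{a}` with `Sum.inl a ∈ A` and the preimages
`fᵢ⁻¹(Iⁱ)` of open intervals of `Mᵢ` whose finite endpoints lie in `A ∩ Mᵢ`. -/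
inductive VO.BIC (V : VO n M0 M) (A : Set (M0 ⊕ Sigma M)) : Set M0 → Prop
  | single (a : M0) (ha : Sum.inl a ∈ A) : VO.BIC V A {a}
  | interval (i : Fin n) (I : Set (M i)) (hI : IsOpenInterval I)
      (hend : EndpointsIn I {x : M i | Sum.inr ⟨i, x⟩ ∈ A}) : VO.BIC V A (V.f i ⁻¹' I)
  | empty : VO.BIC V A ∅
  | compl (E : Set M0) (hE : VO.BIC V A E) : VO.BIC V A Eᶜ
  | union (E F : Set M0) (hE : VO.BIC V A E) (hF : VO.BIC V A F) : VO.BIC V A (E ∪ F)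

/-- `⋃_{I ∈ 𝓘} (⋂ i, fᵢ⁻¹(I i)) ∪ E₀` is a canonical decomposition of `E`:
`𝓘` is a finite set of (componentwise recorded) multi-intervals, `E₀ ⊆ E` is finite,
no element of `E₀` lies in a multi-interval contained in `E`, every `e ∈ E ∖ E₀` has some
`I ∈ 𝓘` as the maximal multi-interval in `E` containing `e`, and every `I ∈ 𝓘` is the
maximal multi-interval in `E` containing some `e ∈ E ∖ E₀`. -/
def VO.IsCanonDecomp (V : VO n M0 M) (E : Set M0)
    (𝓘 : Set (∀ i, Set (M i))) (E0 : Set M0) : Prop :=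
  𝓘.Finite ∧ E0.Finite ∧ E0 ⊆ E ∧
  (∀ I ∈ 𝓘, ∀ i, IsOpenInterval (I i) ∧ (I i).Nonempty) ∧
  E = (⋃ I ∈ 𝓘, ⋂ i, V.f i ⁻¹' I i) ∪ E0 ∧
  (∀ x ∈ E0, ¬ ∃ S : Set M0, V.IsMultiInterval S ∧ x ∈ S ∧ S ⊆ E) ∧
  (∀ e ∈ E \ E0, ∃ I ∈ 𝓘, V.IsMaxMultiInterval E e I) ∧
  (∀ I ∈ 𝓘, ∃ e ∈ E \ E0, V.IsMaxMultiInterval E e I)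

/-!
Write `Sᵢ = ⟨A⟩ ∩ Mᵢ`. Each `Sᵢ` is finite, and since `gᵢ ∘ fᵢ = id`, a point `x` of `M₀` has
either all or none of its coordinates `fᵢ x` in `⟨A⟩`. A basic-interval combination over `A`
cannot separate two points that sit in the same position relative to every `Sᵢ`, so it is a
union of cells cut out by the `Sᵢ` and of some of the finitely many points with coordinates in
`⟨A⟩`; only those points can fail to lie in a multi-interval inside `E`.

At any other point `e` the maximal multi-interval is built sort by sort. Widening an admissible
`m`-th interval to its hull with endpoints in `Sₘ ∪ {±∞}` keeps it admissible, and the union of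
two admissible intervals around `fₘ e` is admissible; so the largest admissible interval is the
union of the finitely many admissible ones with endpoints in `Sₘ ∪ {±∞}`. Maximal multi-intervals
are unique by induction on the sort, which determines `E₀` and the family of intervals.
-/

section ExtendedEndpoints

variable {α : Type*}

/-- Open intervals of `α` with endpoints in `α ∪ {±∞}` are handled uniformly as preimages under
`toExt` of open intervals of `WithBot (WithTop α)`. -/
def toExt (x : α) : WithBot (WithTop α) := ((x : WithTop α) : WithBot (WithTop α))

lemma eq_bot_or_eq_top_or_eq_toExt (a : WithBot (WithTop α)) :
    a = ⊥ ∨ a = ⊤ ∨ ∃ x, a = toExt x := by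
  induction a using WithBot.recBotCoe with
  | bot => exact Or.inl rfl
  | coe c =>
    induction c using WithTop.recTopCoe with
    | top => exact Or.inr (Or.inl rfl)
    | coe x => exact Or.inr (Or.inr ⟨x, rfl⟩)

def extEndpoints (S : Set α) : Set (WithBot (WithTop α)) := insert ⊥ (insert ⊤ (toExt '' S))

lemma extEndpoints_finite {S : Set α} (hS : S.Finite) : (extEndpoints S).Finite :=
  ((hS.image _).insert _).insert _

lemma toExt_mem_extEndpoints {S : Set α} {s : α} (hs : s ∈ S) : toExt s ∈ extEndpoints S :=
  Set.mem_insert_of_mem _ (Set.mem_insert_of_mem _ ⟨s, hs, rfl⟩)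

lemma toExt_mem_extEndpoints_iff {S : Set α} {y : α} : toExt y ∈ extEndpoints S ↔ y ∈ S := by
  simp [extEndpoints, toExt]

variable [LinearOrder α]

@[simp] lemma toExt_lt_toExt {x y : α} : toExt x < toExt y ↔ x < y := by
  simp [toExt]

@[simp] lemma toExt_le_toExt {x y : α} : toExt x ≤ toExt y ↔ x ≤ y := by
  simp [toExt]

@[simp] lemma bot_lt_toExt (x : α) : ⊥ < toExt x := WithBot.bot_lt_coe _

@[simp] lemma toExt_lt_top (x : α) : toExt x < ⊤ :=
  WithBot.coe_lt_coe.2 (WithTop.coe_lt_top x)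

lemma exists_eq_toExt_of_lt_of_lt {a b c : WithBot (WithTop α)} (hac : a < c) (hcb : c < b) :
    ∃ x, c = toExt x := by
  induction c using WithBot.recBotCoe with
  | bot => exact absurd hac not_lt_bot
  | coe c =>
    induction c using WithTop.recTopCoe with
    | top => exact absurd hcb (not_lt.2 le_top)
    | coe x => exact ⟨x, rfl⟩

def extIoo (a b : WithBot (WithTop α)) : Set α := toExt ⁻¹' Set.Ioo a b

@[simp] lemma mem_extIoo {a b : WithBot (WithTop α)} {x : α} :
    x ∈ extIoo a b ↔ a < toExt x ∧ toExt x < b := Iff.rfl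

lemma extIoo_inter_extIoo (a b c d : WithBot (WithTop α)) :
    extIoo a b ∩ extIoo c d = extIoo (max a c) (min b d) := by
  rw [extIoo, extIoo, ← Set.preimage_inter, Set.Ioo_inter_Ioo]; rfl

lemma extIoo_union_extIoo {a b c d : WithBot (WithTop α)} {x : α}
    (hab : x ∈ extIoo a b) (hcd : x ∈ extIoo c d) :
    extIoo a b ∪ extIoo c d = extIoo (min a c) (max b d) := by
  rw [extIoo, extIoo, ← Set.preimage_union, Set.Ioo_union_Ioo' (hcd.1.trans hab.2)
    (hab.1.trans hcd.2)]; rfl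

lemma extIoo_subset_extIoo {a a' b b' : WithBot (WithTop α)} (ha : a' ≤ a) (hb : b ≤ b') :
    extIoo a b ⊆ extIoo a' b' :=
  Set.preimage_mono (Set.Ioo_subset_Ioo ha hb)

lemma exists_Ioo_subset_extIoo [Nonempty α] [DenselyOrdered α] [NoMinOrder α] [NoMaxOrder α]
    {a b : WithBot (WithTop α)} (hab : a < b) :
    ∃ u v : α, u < v ∧ Set.Ioo u v ⊆ extIoo a b := by
  obtain ⟨p, hap, hpb⟩ := exists_between hab
  obtain ⟨q, hpq, hqb⟩ := exists_between hpb
  obtain ⟨u, rfl⟩ := exists_eq_toExt_of_lt_of_lt hap hpb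
  obtain ⟨v, rfl⟩ := exists_eq_toExt_of_lt_of_lt hpq hqb
  exact ⟨u, v, toExt_lt_toExt.1 hpq, fun x hx =>
    ⟨hap.trans (toExt_lt_toExt.2 hx.1), (toExt_lt_toExt.2 hx.2).trans hqb⟩⟩

@[simp] lemma extIoo_toExt_toExt (x y : α) : extIoo (toExt x) (toExt y) = Set.Ioo x y := by
  ext; simp

@[simp] lemma extIoo_toExt_top (x : α) : extIoo (toExt x) ⊤ = Set.Ioi x := by
  ext; simp

@[simp] lemma extIoo_bot_toExt (y : α) : extIoo ⊥ (toExt y) = Set.Iio y := by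
  ext; simp

@[simp] lemma extIoo_bot_top : extIoo (⊥ : WithBot (WithTop α)) ⊤ = Set.univ := by
  ext; simp

@[simp] lemma extIoo_top_left (b : WithBot (WithTop α)) : extIoo ⊤ b = ∅ := by
  ext; simp [not_lt_of_ge le_top]

@[simp] lemma extIoo_bot_right (a : WithBot (WithTop α)) : extIoo a ⊥ = ∅ := by
  ext; simp

lemma isOpenInterval_iff_exists_extIoo [Nonempty α] {I : Set α} :
    IsOpenInterval I ↔ ∃ a b : WithBot (WithTop α), I = extIoo a b := by
  constructor
  · rintro (⟨a, b, rfl⟩ | ⟨a, rfl⟩ | ⟨b, rfl⟩ | rfl)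
    exacts [⟨_, _, (extIoo_toExt_toExt a b).symm⟩, ⟨_, _, (extIoo_toExt_top a).symm⟩,
      ⟨_, _, (extIoo_bot_toExt b).symm⟩, ⟨_, _, extIoo_bot_top.symm⟩]
  · rintro ⟨a, b, rfl⟩
    obtain ⟨x⟩ := ‹Nonempty α›
    rcases eq_bot_or_eq_top_or_eq_toExt a with rfl | rfl | ⟨a, rfl⟩ <;>
      rcases eq_bot_or_eq_top_or_eq_toExt b with rfl | rfl | ⟨b, rfl⟩ <;>
      simp only [IsOpenInterval, extIoo_toExt_toExt, extIoo_toExt_top, extIoo_bot_toExt,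
        extIoo_bot_top, extIoo_top_left, extIoo_bot_right]
    all_goals first
      | exact Or.inl ⟨x, x, (Set.Ioo_self x).symm⟩
      | exact Or.inl ⟨_, _, rfl⟩
      | exact Or.inr (Or.inl ⟨_, rfl⟩)
      | exact Or.inr (Or.inr (Or.inl ⟨_, rfl⟩))
      | exact Or.inr (Or.inr (Or.inr trivial))

lemma isOpenInterval_extIoo [Nonempty α] (a b : WithBot (WithTop α)) :
    IsOpenInterval (extIoo a b) :=
  isOpenInterval_iff_exists_extIoo.2 ⟨a, b, rfl⟩

lemma IsOpenInterval.inter [Nonempty α] {I J : Set α} (hI : IsOpenInterval I)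
    (hJ : IsOpenInterval J) : IsOpenInterval (I ∩ J) := by
  obtain ⟨a, b, rfl⟩ := isOpenInterval_iff_exists_extIoo.1 hI
  obtain ⟨c, d, rfl⟩ := isOpenInterval_iff_exists_extIoo.1 hJ
  rw [extIoo_inter_extIoo]
  exact isOpenInterval_extIoo _ _

def extIoos (S : Set α) : Set (Set α) := Set.image2 extIoo (extEndpoints S) (extEndpoints S)

lemma extIoos_finite {S : Set α} (hS : S.Finite) : (extIoos S).Finite :=
  (extEndpoints_finite hS).image2 _ (extEndpoints_finite hS)

lemma endpointsIn_of_mem_extIoos {S I : Set α} (hI : I ∈ extIoos S) (hne : I.Nonempty) :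
    EndpointsIn I S := by
  obtain ⟨a, ha, b, hb, rfl⟩ := hI
  have hab : a < b := hne.some_mem.1.trans hne.some_mem.2
  simp only [extEndpoints, Set.mem_insert_iff, Set.mem_image] at ha hb
  rcases ha with rfl | rfl | ⟨x, hx, rfl⟩ <;> rcases hb with rfl | rfl | ⟨y, hy, rfl⟩ <;>
    try simp at hab
  exacts [Or.inr (Or.inr (Or.inr extIoo_bot_top)),
    Or.inr (Or.inr (Or.inl ⟨y, hy, extIoo_bot_toExt y⟩)),
    Or.inr (Or.inl ⟨x, hx, extIoo_toExt_top x⟩),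
    Or.inl ⟨x, hx, y, hy, extIoo_toExt_toExt x y⟩]

lemma exists_extEndpoints_hull {S : Set α} (hS : S.Finite) (a b : WithBot (WithTop α)) :
    ∃ a' ∈ extEndpoints S, ∃ b' ∈ extEndpoints S, a' ≤ a ∧ b ≤ b' ∧
      (∀ s ∈ extEndpoints S, s ≤ a → s ≤ a') ∧ (∀ s ∈ extEndpoints S, b ≤ s → b' ≤ s) := by
  obtain ⟨a', ha', hmax⟩ := Set.exists_max_image {s ∈ extEndpoints S | s ≤ a} id
    ((extEndpoints_finite hS).subset (Set.sep_subset _ _)) ⟨⊥, Set.mem_insert _ _, bot_le⟩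
  obtain ⟨b', hb', hmin⟩ := Set.exists_min_image {s ∈ extEndpoints S | b ≤ s} id
    ((extEndpoints_finite hS).subset (Set.sep_subset _ _))
    ⟨⊤, Set.mem_insert_of_mem _ (Set.mem_insert _ _), le_top⟩
  exact ⟨a', ha'.1, b', hb'.1, ha'.2, hb'.2, fun s hs hsa => hmax s ⟨hs, hsa⟩,
    fun s hs hbs => hmin s ⟨hs, hbs⟩⟩

lemma exists_extIoo_cell {S : Set α} (hS : S.Finite) {y : α} (hy : y ∉ S) :
    ∃ c ∈ extEndpoints S, ∃ d ∈ extEndpoints S, y ∈ extIoo c d ∧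
      ∀ y' ∈ extIoo c d, ∀ s ∈ S, compare s y' = compare s y := by
  obtain ⟨c, hc, d, hd, hcy, hyd, hcmax, hdmin⟩ := exists_extEndpoints_hull hS (toExt y) (toExt y)
  have hcy' : c < toExt y := hcy.lt_of_ne fun h => hy (toExt_mem_extEndpoints_iff.1 (h ▸ hc))
  have hyd' : toExt y < d := hyd.lt_of_ne fun h => hy (toExt_mem_extEndpoints_iff.1 (h ▸ hd))
  refine ⟨c, hc, d, hd, ⟨hcy', hyd'⟩, fun y' hy' s hs => ?_⟩
  rcases lt_trichotomy s y with hsy | rfl | hys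
  · have hsc := hcmax _ (toExt_mem_extEndpoints hs) (toExt_le_toExt.2 hsy.le)
    rw [compare_lt_iff_lt.2 hsy, compare_lt_iff_lt.2 (toExt_lt_toExt.1 (hsc.trans_lt hy'.1))]
  · exact absurd hs hy
  · have hds := hdmin _ (toExt_mem_extEndpoints hs) (toExt_le_toExt.2 hys.le)
    rw [compare_gt_iff_gt.2 hys, compare_gt_iff_gt.2 (toExt_lt_toExt.1 (hy'.2.trans_le hds))]

lemma exists_lt_extIoo_subset_inter [Nonempty α] {I : Set α} (hI : IsOpenInterval I)
    {c d : WithBot (WithTop α)} {x : α} (hx : x ∈ I ∩ extIoo c d) :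
    ∃ p q, p < q ∧ extIoo p q ⊆ I ∩ extIoo c d := by
  obtain ⟨a, b, rfl⟩ := isOpenInterval_iff_exists_extIoo.1 hI
  rw [extIoo_inter_extIoo] at hx ⊢
  exact ⟨_, _, hx.1.trans hx.2, subset_rfl⟩

end ExtendedEndpoints

/-- If `(a', b')` is the hull of `(a, b)` with respect to the endpoints `T`, then any cell
`(c, d)` of `T` around a point of `(a', b')` still meets `(a, b)`. -/
lemma max_lt_min_of_mem_hull {β : Type*} [LinearOrder β] {T : Set β} {a b a' b' c d y : β}
    (hab : a < b) (ha' : ∀ s ∈ T, s ≤ a → s ≤ a') (hb' : ∀ s ∈ T, b ≤ s → b' ≤ s)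
    (hc : c ∈ T) (hd : d ∈ T) (hy' : a' < y ∧ y < b') (hy : c < y ∧ y < d) :
    max a c < min b d := by
  have had : a < d := lt_of_not_ge fun hda => (hy'.1.trans hy.2).not_ge (ha' d hd hda)
  have hcb : c < b := lt_of_not_ge fun hbc => (hy.1.trans hy'.2).not_ge (hb' c hc hbc)
  exact max_lt (lt_min hab had) (lt_min hcb (hy.1.trans hy.2))

lemma mem_iInter_preimage_update_iff {ι γ : Type*} [DecidableEq ι] {β : ι → Type*}
    (f : ∀ i, γ → β i) (K : ∀ i, Set (β i)) (m : ι) (X : Set (β m)) (z : γ) :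
    z ∈ ⋂ i, f i ⁻¹' Function.update K m X i ↔ f m z ∈ X ∧ ∀ i ≠ m, f i z ∈ K i := by
  simp only [Set.mem_iInter, Set.mem_preimage]
  refine ⟨fun h => ⟨by simpa using h m, fun i hi => by simpa [hi] using h i⟩, fun h i => ?_⟩
  rcases eq_or_ne i m with rfl | hi
  · simpa using h.1
  · simpa [hi] using h.2 i hi

namespace VO

lemma nonempty_sort (V : VO n M0 M) (i : Fin n) : Nonempty (M i) := ⟨V.f i V.zero⟩

lemma denselyOrdered (V : VO n M0 M) (i : Fin n) : DenselyOrdered (M i) := ⟨V.lt_dense i⟩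

lemma noMaxOrder (V : VO n M0 M) (i : Fin n) : NoMaxOrder (M i) := ⟨V.no_top i⟩

lemma noMinOrder (V : VO n M0 M) (i : Fin n) : NoMinOrder (M i) := ⟨V.no_bot i⟩

@[simp] lemma g_f (V : VO n M0 M) (i : Fin n) (x : M0) : V.g i (V.f i x) = x := by
  have h : ∃ x', V.f i x' = V.f i x := ⟨x, rfl⟩
  rw [VO.g, dif_pos h]
  exact V.f_inj i h.choose_spec

lemma exists_forall_f_mem_extIoo (V : VO n M0 M) {a b : ∀ i, WithBot (WithTop (M i))}
    (hab : ∀ i, a i < b i) :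
    ∃ x, ∀ i, V.f i x ∈ extIoo (a i) (b i) := by
  have := V.nonempty_sort
  have := V.denselyOrdered
  have := V.noMaxOrder
  have := V.noMinOrder
  choose u v huv hsub using fun i => exists_Ioo_subset_extIoo (hab i)
  obtain ⟨x, hx⟩ := V.sim_dense u v huv
  exact ⟨x, fun i => hsub i (hx i)⟩

/-- `⟨A⟩ ∩ Mᵢ`. -/
def genSort (V : VO n M0 M) (A : Set (M0 ⊕ Sigma M)) (i : Fin n) : Set (M i) :=
  {y | V.gen A (Sum.inr ⟨i, y⟩)}

variable {V : VO n M0 M} {A : Set (M0 ⊕ Sigma M)} {E : Set M0} {e : M0}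

lemma f_mem_genSort_of_mem {z : M0} {i : Fin n} (h : V.f i z ∈ V.genSort A i) (j : Fin n) :
    V.f j z ∈ V.genSort A j :=
  gen.fcl j z (V.g_f i z ▸ gen.gcl i _ h)

variable (V) in
lemma f_mem_genSort_of_inl_mem {a : M0} (ha : Sum.inl a ∈ A) (i : Fin n) :
    V.f i a ∈ V.genSort A i :=
  gen.fcl i a (gen.mem _ ha)

variable (V A) in
/-- A finite set containing the `M₀`-part of `⟨A⟩`: one application of some `gᵢ` to `A` is all
that is ever needed, since `gᵢ ∘ fᵢ = id`. -/
def genZeroBound : Set M0 :=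
  insert V.zero (Sum.inl ⁻¹' A ∪ (fun p : Sigma M => V.g p.1 p.2) '' (Sum.inr ⁻¹' A))

variable (V) in
lemma genZeroBound_finite (hA : A.Finite) : (genZeroBound V A).Finite :=
  ((hA.preimage Sum.inl_injective.injOn).union
    ((hA.preimage Sum.inr_injective.injOn).image _)).insert _

lemma gen_mem_bound {z : M0 ⊕ Sigma M} (h : V.gen A z) :
    z ∈ A ∨ (∃ x ∈ genZeroBound V A, z = Sum.inl x) ∨
      ∃ i, ∃ x ∈ genZeroBound V A, z = Sum.inr ⟨i, V.f i x⟩ := by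
  induction h with
  | mem z hz => exact Or.inl hz
  | zero => exact Or.inr (Or.inl ⟨_, Set.mem_insert _ _, rfl⟩)
  | fcl i x _ ih =>
    refine Or.inr (Or.inr ⟨i, x, ?_, rfl⟩)
    rcases ih with hx | ⟨x', hx', hxx'⟩ | ⟨_, _, _, h⟩
    · exact Set.mem_insert_of_mem _ (Or.inl hx)
    · rwa [Sum.inl.inj hxx']
    · exact absurd h Sum.inl_ne_inr
  | gcl i y _ ih =>
    refine Or.inr (Or.inl ⟨_, ?_, rfl⟩)
    rcases ih with hy | ⟨_, _, h⟩ | ⟨j, x, hx, h⟩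
    · exact Set.mem_insert_of_mem _ (Or.inr ⟨⟨i, y⟩, hy, rfl⟩)
    · exact absurd h.symm Sum.inl_ne_inr
    · obtain ⟨rfl, h⟩ := Sigma.mk.inj (Sum.inr.inj h)
      rwa [eq_of_heq h, g_f]

variable (V) in
lemma genSort_finite (hA : A.Finite) (i : Fin n) : (V.genSort A i).Finite := by
  refine ((hA.preimage (Sum.inr_injective.comp sigma_mk_injective).injOn).union
    ((genZeroBound_finite V hA).image (V.f i))).subset fun y hy => ?_
  rcases gen_mem_bound hy with hy | ⟨_, _, h⟩ | ⟨j, x, hx, h⟩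
  · exact Or.inl hy
  · exact absurd h.symm Sum.inl_ne_inr
  · obtain ⟨rfl, h⟩ := Sigma.mk.inj (Sum.inr.inj h)
    exact Or.inr ⟨x, hx, (eq_of_heq h).symm⟩

variable (V) in
lemma finite_setOf_f_mem_genSort (hA : A.Finite) :
    {x : M0 | ∃ i, V.f i x ∈ V.genSort A i}.Finite :=
  (Set.finite_iUnion fun i => (V.genSort_finite hA i).image (V.g i)).subset
    fun x ⟨i, hi⟩ => Set.mem_iUnion.2 ⟨i, V.f i x, hi, V.g_f i x⟩

variable (V A) in
def SameCell (z w : M0) : Prop :=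
  ∀ i, ∀ s ∈ V.genSort A i, compare s (V.f i z) = compare s (V.f i w)

lemma BIC.mem_iff_of_sameCell (hn : 1 ≤ n) (hE : V.BIC A E) {z w : M0}
    (h : V.SameCell A z w) : z ∈ E ↔ w ∈ E := by
  have hlt : ∀ i, ∀ s ∈ V.genSort A i, s < V.f i z ↔ s < V.f i w := fun i s hs => by
    rw [← compare_lt_iff_lt, h i s hs, compare_lt_iff_lt]
  have hgt : ∀ i, ∀ s ∈ V.genSort A i, V.f i z < s ↔ V.f i w < s := fun i s hs => by
    simpa only [compare_gt_iff_gt, gt_iff_lt] using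
      (show compare s (V.f i z) = .gt ↔ compare s (V.f i w) = .gt by rw [h i s hs])
  have hA : ∀ i, {y : M i | Sum.inr ⟨i, y⟩ ∈ A} ⊆ V.genSort A i := fun i y hy => gen.mem _ hy
  induction hE with
  | single a ha =>
    have hs := V.f_mem_genSort_of_inl_mem ha ⟨0, hn⟩
    rw [Set.mem_singleton_iff, Set.mem_singleton_iff, ← (V.f_inj ⟨0, hn⟩).eq_iff,
      ← (V.f_inj ⟨0, hn⟩).eq_iff, @eq_comm _ (V.f _ z), @eq_comm _ (V.f _ w),
      ← compare_eq_iff_eq (a := V.f _ a), ← compare_eq_iff_eq (a := V.f _ a), h _ _ hs]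
  | interval i I _ hend =>
    simp only [Set.mem_preimage]
    rcases hend with ⟨a, ha, b, hb, rfl⟩ | ⟨a, ha, rfl⟩ | ⟨b, hb, rfl⟩ | rfl
    · simp only [Set.mem_Ioo, hlt i a (hA i ha), hgt i b (hA i hb)]
    · simp only [Set.mem_Ioi, hlt i a (hA i ha)]
    · simp only [Set.mem_Iio, hgt i b (hA i hb)]
    · simp only [Set.mem_univ]
  | empty => simp only [Set.mem_empty_iff_false]
  | compl E _ ih => exact not_congr ih
  | union E F _ _ ihE ihF => exact or_congr ihE ihF

lemma exists_cellBox (hA : A.Finite) {z : M0} (hz : ∀ i, V.f i z ∉ V.genSort A i) :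
    ∃ c d : ∀ i, WithBot (WithTop (M i)),
      (∀ i, c i ∈ extEndpoints (V.genSort A i) ∧ d i ∈ extEndpoints (V.genSort A i) ∧
        V.f i z ∈ extIoo (c i) (d i)) ∧
      ∀ w, (∀ i, V.f i w ∈ extIoo (c i) (d i)) → V.SameCell A w z := by
  choose c hc d hd hz hcell using fun i => exists_extIoo_cell (V.genSort_finite hA i) (hz i)
  exact ⟨c, d, fun i => ⟨hc i, hd i, hz i⟩, fun w hw i s hs => hcell i _ (hw i) s hs⟩

variable (V) in
def notMultiInterior (E : Set M0) : Set M0 :=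
  {x ∈ E | ¬ ∃ S : Set M0, V.IsMultiInterval S ∧ x ∈ S ∧ S ⊆ E}

lemma BIC.notMultiInterior_finite (hn : 1 ≤ n) (hA : A.Finite) (hE : V.BIC A E) :
    (V.notMultiInterior E).Finite := by
  have := V.nonempty_sort
  refine (V.finite_setOf_f_mem_genSort hA).subset fun x hx => ?_
  by_contra hxA
  obtain ⟨c, d, hcd, hcell⟩ := exists_cellBox hA fun i hi => hxA ⟨i, hi⟩
  refine hx.2 ⟨⋂ i, V.f i ⁻¹' extIoo (c i) (d i),
    ⟨_, fun i => ⟨isOpenInterval_extIoo _ _, _, (hcd i).2.2⟩, rfl⟩,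
    Set.mem_iInter.2 fun i => (hcd i).2.2, fun w hw => ?_⟩
  exact (hE.mem_iff_of_sameCell hn (hcell w (Set.mem_iInter.1 hw))).2 hx.1

variable (V) in
/-- The condition on `X` in the maximality clause of `IsMaxMultiInterval`, with the intervals
`J j` of the later sorts recorded as the tail of `K`. -/
def Admissible (E : Set M0) (e : M0) (I : ∀ i, Set (M i)) (m : Fin n) (X : Set (M m)) : Prop :=
  ∃ K : ∀ i, Set (M i), (∀ l < m, K l = I l) ∧ K m = X ∧
    (∀ j, m < j → IsOpenInterval (K j) ∧ V.f j e ∈ K j) ∧ ⋂ i, V.f i ⁻¹' K i ⊆ E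

lemma Admissible.congr {I I' : ∀ i, Set (M i)} {m : Fin n} {X : Set (M m)}
    (h : ∀ l < m, I l = I' l) (hX : V.Admissible E e I m X) : V.Admissible E e I' m X := by
  obtain ⟨K, hKI, hKm, hK, hKE⟩ := hX
  exact ⟨K, fun l hl => (hKI l hl).trans (h l hl), hKm, hK, hKE⟩

lemma Admissible.union {I : ∀ i, Set (M i)} {m : Fin n} {X Y : Set (M m)}
    (hX : V.Admissible E e I m X) (hY : V.Admissible E e I m Y) :
    V.Admissible E e I m (X ∪ Y) := by
  have := V.nonempty_sort
  obtain ⟨K, hKI, rfl, hK, hKE⟩ := hX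
  obtain ⟨K', hK'I, rfl, hK', hK'E⟩ := hY
  refine ⟨Function.update (fun i => K i ∩ K' i) m (K m ∪ K' m), fun l hl => ?_, by simp,
    fun j hj => ?_, fun z hz => ?_⟩
  · rw [Function.update_of_ne hl.ne, hKI l hl, hK'I l hl, Set.inter_self]
  · rw [Function.update_of_ne hj.ne']
    exact ⟨(hK j hj).1.inter (hK' j hj).1, (hK j hj).2, (hK' j hj).2⟩
  · rw [mem_iInter_preimage_update_iff] at hz
    rcases hz.1 with hzm | hzm
    · refine hKE (Set.mem_iInter.2 fun i => ?_)
      rcases eq_or_ne i m with rfl | hi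
      exacts [hzm, (hz.2 i hi).1]
    · refine hK'E (Set.mem_iInter.2 fun i => ?_)
      rcases eq_or_ne i m with rfl | hi
      exacts [hzm, (hz.2 i hi).2]

lemma admissible_of_subset {I J : ∀ i, Set (M i)} {m : Fin n} {X : Set (M m)}
    (hJ : ∀ j, m < j → IsOpenInterval (J j) ∧ V.f j e ∈ J j)
    (hsub : (⋂ l, ⋂ _ : l < m, V.f l ⁻¹' I l) ∩ V.f m ⁻¹' X ∩
      ⋂ j, ⋂ _ : m < j, V.f j ⁻¹' J j ⊆ E) :
    V.Admissible E e I m X := by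
  refine ⟨Function.update (fun i => if i < m then I i else J i) m X,
    fun l hl => by simp [hl.ne, hl], by simp, fun j hj => ?_, fun z hz => hsub ?_⟩
  · simpa [hj.ne', hj.not_gt] using hJ j hj
  · rw [mem_iInter_preimage_update_iff] at hz
    simp only [Set.mem_inter_iff, Set.mem_iInter, Set.mem_preimage]
    exact ⟨⟨fun l hl => by simpa [hl] using hz.2 l hl.ne, hz.1⟩,
      fun j hj => by simpa [hj.not_gt] using hz.2 j hj.ne'⟩

/-- A point of the enlarged box outside `⟨A⟩` shares its cell with a point of the original box
(by simultaneous density), and a point inside `⟨A⟩` was already in the original box. -/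
lemma BIC.iInter_preimage_update_hull_subset (hn : 1 ≤ n) (hA : A.Finite) (hE : V.BIC A E)
    {K : ∀ i, Set (M i)} (hK : ∀ i, IsOpenInterval (K i)) (hKE : ⋂ i, V.f i ⁻¹' K i ⊆ E)
    {m : Fin n} {a b a' b' : WithBot (WithTop (M m))} (hab : a < b) (hKm : K m = extIoo a b)
    (ha' : ∀ s ∈ extEndpoints (V.genSort A m), s ≤ a → s ≤ a')
    (hb' : ∀ s ∈ extEndpoints (V.genSort A m), b ≤ s → b' ≤ s) :
    ⋂ i, V.f i ⁻¹' Function.update K m (extIoo a' b') i ⊆ E := by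
  have := V.nonempty_sort
  intro z hz
  obtain ⟨hzm, hzK⟩ := (mem_iInter_preimage_update_iff _ _ _ _ _).1 hz
  by_cases hzA : ∃ i, V.f i z ∈ V.genSort A i
  · obtain ⟨i, hi⟩ := hzA
    have hs := toExt_mem_extEndpoints (f_mem_genSort_of_mem hi m)
    refine hKE (Set.mem_iInter.2 fun i => ?_)
    rcases eq_or_ne i m with rfl | hi
    · rw [Set.mem_preimage, hKm]
      exact ⟨lt_of_not_ge fun h => hzm.1.not_ge (ha' _ hs h),
        lt_of_not_ge fun h => hzm.2.not_ge (hb' _ hs h)⟩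
    · exact hzK i hi
  · obtain ⟨c, d, hcd, hcell⟩ := exists_cellBox hA fun i hi => hzA ⟨i, hi⟩
    have hmeet : ∀ i, ∃ p q, p < q ∧ extIoo p q ⊆ K i ∩ extIoo (c i) (d i) := by
      intro i
      rcases eq_or_ne i m with rfl | hi
      · rw [hKm, extIoo_inter_extIoo]
        exact ⟨_, _, max_lt_min_of_mem_hull hab ha' hb' (hcd i).1 (hcd i).2.1 hzm (hcd i).2.2,
          subset_rfl⟩
      · exact exists_lt_extIoo_subset_inter (hK i) ⟨hzK i hi, (hcd i).2.2⟩
    choose p q hpq hsub using hmeet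
    obtain ⟨w, hw⟩ := V.exists_forall_f_mem_extIoo hpq
    exact (hE.mem_iff_of_sameCell hn (hcell w fun i => (hsub i (hw i)).2)).1
      (hKE (Set.mem_iInter.2 fun i => (hsub i (hw i)).1))

lemma BIC.admissible_hull (hn : 1 ≤ n) (hA : A.Finite) (hE : V.BIC A E) {I : ∀ i, Set (M i)}
    {m : Fin n} (hI : ∀ l < m, IsOpenInterval (I l)) {a b a' b' : WithBot (WithTop (M m))}
    (hab : a < b) (hadm : V.Admissible E e I m (extIoo a b))
    (ha' : ∀ s ∈ extEndpoints (V.genSort A m), s ≤ a → s ≤ a')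
    (hb' : ∀ s ∈ extEndpoints (V.genSort A m), b ≤ s → b' ≤ s) :
    V.Admissible E e I m (extIoo a' b') := by
  have := V.nonempty_sort
  obtain ⟨K, hKI, hKm, hK, hKE⟩ := hadm
  have hKopen : ∀ i, IsOpenInterval (K i) := by
    intro i
    rcases lt_trichotomy i m with hi | rfl | hi
    · rw [hKI i hi]; exact hI i hi
    · rw [hKm]; exact isOpenInterval_extIoo a b
    · exact (hK i hi).1
  refine ⟨Function.update K m (extIoo a' b'), fun l hl => ?_, by simp, fun j hj => ?_,
    hE.iInter_preimage_update_hull_subset hn hA hKopen hKE hab hKm ha' hb'⟩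
  · rw [Function.update_of_ne hl.ne, hKI l hl]
  · rw [Function.update_of_ne hj.ne']; exact hK j hj

lemma BIC.exists_largest_admissible (hn : 1 ≤ n) (hA : A.Finite) (hE : V.BIC A E)
    {I : ∀ i, Set (M i)} {m : Fin n} (hI : ∀ l < m, IsOpenInterval (I l)) {X₀ : Set (M m)}
    (hX₀ : IsOpenInterval X₀) (heX₀ : V.f m e ∈ X₀) (hadm₀ : V.Admissible E e I m X₀) :
    ∃ Y ∈ extIoos (V.genSort A m),
      V.f m e ∈ Y ∧ V.Admissible E e I m Y ∧
      ∀ X, IsOpenInterval X → V.f m e ∈ X → V.Admissible E e I m X → X ⊆ Y := by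
  have := V.nonempty_sort
  set 𝒳 : Set (Set (M m)) :=
    {Y | Y ∈ extIoos (V.genSort A m) ∧ V.f m e ∈ Y ∧ V.Admissible E e I m Y}
  have hhull : ∀ X, IsOpenInterval X → V.f m e ∈ X → V.Admissible E e I m X →
      ∃ Y ∈ 𝒳, X ⊆ Y := by
    intro X hX heX hadm
    obtain ⟨a, b, rfl⟩ := isOpenInterval_iff_exists_extIoo.1 hX
    obtain ⟨a', ha', b', hb', haa', hbb', hmax, hmin⟩ :=
      exists_extEndpoints_hull (V.genSort_finite hA m) a b
    have hsub := extIoo_subset_extIoo haa' hbb'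
    exact ⟨_, ⟨Set.mem_image2_of_mem ha' hb', hsub heX,
      hE.admissible_hull hn hA hI (heX.1.trans heX.2) hadm hmax hmin⟩, hsub⟩
  have hsup : SupClosed 𝒳 := by
    rintro _ ⟨⟨a, ha, b, hb, rfl⟩, heX, hX⟩ _ ⟨⟨c, hc, d, hd, rfl⟩, heY, hY⟩
    refine ⟨?_, Or.inl heX, hX.union hY⟩
    change extIoo a b ∪ extIoo c d ∈ _
    rw [extIoo_union_extIoo heX heY]
    exact Set.mem_image2_of_mem (by rcases min_choice a c with h | h <;> rwa [h])
      (by rcases max_choice b d with h | h <;> rwa [h])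
  have hfin : 𝒳.Finite := (extIoos_finite (V.genSort_finite hA m)).subset fun _ hY => hY.1
  obtain ⟨Y₀, hY₀, -⟩ := hhull X₀ hX₀ heX₀ hadm₀
  obtain ⟨hmem, he, hadm⟩ := hsup.sSup_mem_of_nonempty hfin ⟨Y₀, hY₀⟩ subset_rfl
  refine ⟨sSup 𝒳, hmem, he, hadm, fun X hX heX hadmX => ?_⟩
  obtain ⟨Y, hY, hXY⟩ := hhull X hX heX hadmX
  exact hXY.trans (le_sSup hY)

variable (V A) in
/-- Invariant of the sort-by-sort construction of the maximal multi-interval. -/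
def IsMaxPrefix (E : Set M0) (e : M0) (k : ℕ) (I : ∀ i, Set (M i)) : Prop :=
  (∀ i, IsOpenInterval (I i) ∧ V.f i e ∈ I i) ∧ ⋂ i, V.f i ⁻¹' I i ⊆ E ∧
  ∀ m : Fin n, m.val < k → I m ∈ extIoos (V.genSort A m) ∧
    ∀ X, IsOpenInterval X → V.f m e ∈ X → V.Admissible E e I m X → X ⊆ I m

lemma exists_isMaxPrefix_zero {S : Set M0} (hS : V.IsMultiInterval S) (heS : e ∈ S)
    (hSE : S ⊆ E) : ∃ I, V.IsMaxPrefix A E e 0 I := by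
  obtain ⟨I, hI, rfl⟩ := hS
  exact ⟨I, fun i => ⟨(hI i).1, Set.mem_iInter.1 heS i⟩, hSE,
    fun m hm => absurd hm (Nat.not_lt_zero _)⟩

lemma BIC.exists_isMaxPrefix_succ (hn : 1 ≤ n) (hA : A.Finite) (hE : V.BIC A E) {k : ℕ}
    (hk : k < n) {I : ∀ i, Set (M i)} (hI : V.IsMaxPrefix A E e k I) :
    ∃ I', V.IsMaxPrefix A E e (k + 1) I' := by
  have := V.nonempty_sort
  obtain ⟨hopen, hIE, hmax⟩ := hI
  set m : Fin n := ⟨k, hk⟩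
  obtain ⟨Y, hYT, heY, ⟨K, hKI, hKm, hK, hKE⟩, hYmax⟩ :=
    hE.exists_largest_admissible hn hA (fun l _ => (hopen l).1) (hopen m).1 (hopen m).2
      ⟨I, fun _ _ => rfl, rfl, fun j _ => hopen j, hIE⟩
  refine ⟨K, fun i => ?_, hKE, fun m' hm' => ?_⟩
  · rcases lt_trichotomy i m with hi | rfl | hi
    · rw [hKI i hi]; exact hopen i
    · obtain ⟨a, -, b, -, rfl⟩ := hYT
      rw [hKm]; exact ⟨isOpenInterval_extIoo a b, heY⟩
    · exact hK i hi
  · rcases Nat.lt_succ_iff_lt_or_eq.1 hm' with hm' | hm'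
    · have hm'm : m' < m := hm'
      rw [hKI m' hm'm]
      exact ⟨(hmax m' hm').1, fun X hX heX h =>
        (hmax m' hm').2 X hX heX (h.congr fun l hl => hKI l (hl.trans hm'm))⟩
    · obtain rfl : m' = m := Fin.ext hm'
      rw [hKm]
      exact ⟨hYT, fun X hX heX h => hYmax X hX heX (h.congr hKI)⟩

lemma BIC.exists_isMaxMultiInterval (hn : 1 ≤ n) (hA : A.Finite) (hE : V.BIC A E)
    (he : ∃ S, V.IsMultiInterval S ∧ e ∈ S ∧ S ⊆ E) :
    ∃ I, V.IsMaxMultiInterval E e I ∧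
      ∀ i, I i ∈ extIoos (V.genSort A i) := by
  obtain ⟨S, hS, heS, hSE⟩ := he
  have hstage : ∀ k ≤ n, ∃ I, V.IsMaxPrefix A E e k I := by
    intro k hk
    induction k with
    | zero => exact exists_isMaxPrefix_zero hS heS hSE
    | succ k ih =>
      obtain ⟨I, hI⟩ := ih (Nat.le_of_succ_le hk)
      exact hE.exists_isMaxPrefix_succ hn hA hk hI
  obtain ⟨I, hopen, hIE, hmax⟩ := hstage n le_rfl
  exact ⟨I, ⟨fun i => (hopen i).1, fun i => (hopen i).2, hIE, fun m X hX heX ⟨J, hJ, hJE⟩ =>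
    (hmax m m.isLt).2 X hX heX (admissible_of_subset hJ hJE)⟩, fun i => (hmax i i.isLt).1⟩

lemma IsMaxMultiInterval.subset_of_eqOn {I I' : ∀ i, Set (M i)}
    (h : V.IsMaxMultiInterval E e I) (h' : V.IsMaxMultiInterval E e I') {m : Fin n}
    (hII' : ∀ l < m, I l = I' l) : I' m ⊆ I m := by
  obtain ⟨-, -, -, hmax⟩ := h
  obtain ⟨hopen', hmem', hsub', -⟩ := h'
  refine hmax m (I' m) (hopen' m) (hmem' m) ⟨I', fun j _ => ⟨hopen' j, hmem' j⟩, ?_⟩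
  rintro z ⟨⟨hzl, hzm⟩, hzj⟩
  simp only [Set.mem_iInter, Set.mem_preimage] at hzl hzj
  refine hsub' (Set.mem_iInter.2 fun i => ?_)
  rcases lt_trichotomy i m with hi | rfl | hi
  · rw [← hII' i hi]; exact hzl i hi
  · exact hzm
  · exact hzj i hi

lemma IsMaxMultiInterval.eq {I I' : ∀ i, Set (M i)} (h : V.IsMaxMultiInterval E e I)
    (h' : V.IsMaxMultiInterval E e I') : I = I' := by
  funext m
  induction m using WellFoundedLT.induction with
  | _ m ih =>
    exact (h'.subset_of_eqOn h fun l hl => (ih l hl).symm).antisymm (h.subset_of_eqOn h' ih)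

lemma IsMaxMultiInterval.notMem_notMultiInterior {I : ∀ i, Set (M i)}
    (h : V.IsMaxMultiInterval E e I) : e ∉ V.notMultiInterior E :=
  fun he => he.2 ⟨_, ⟨I, fun i => ⟨h.1 i, _, h.2.1 i⟩, rfl⟩, Set.mem_iInter.2 h.2.1, h.2.2.1⟩

variable (V) in
def maxMultiIntervals (E : Set M0) : Set (∀ i, Set (M i)) :=
  {I | ∃ e ∈ E \ V.notMultiInterior E, V.IsMaxMultiInterval E e I}

lemma IsCanonDecomp.eq_notMultiInterior {𝓘 : Set (∀ i, Set (M i))} {E0 : Set M0}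
    (h : V.IsCanonDecomp E 𝓘 E0) : E0 = V.notMultiInterior E := by
  obtain ⟨-, -, hE0E, -, -, hE0, hmax, -⟩ := h
  refine Set.Subset.antisymm (fun x hx => ⟨hE0E hx, hE0 x hx⟩) fun x hx => ?_
  by_contra hx0
  obtain ⟨I, -, hI⟩ := hmax x ⟨hx.1, hx0⟩
  exact hI.notMem_notMultiInterior hx

lemma IsCanonDecomp.eq_maxMultiIntervals {𝓘 : Set (∀ i, Set (M i))} {E0 : Set M0}
    (h : V.IsCanonDecomp E 𝓘 E0) : 𝓘 = V.maxMultiIntervals E := by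
  obtain rfl := h.eq_notMultiInterior
  obtain ⟨-, -, -, -, -, -, hmax, hrev⟩ := h
  refine Set.Subset.antisymm hrev fun I ⟨e, he, hI⟩ => ?_
  obtain ⟨I', hI', hI'max⟩ := hmax e he
  rwa [← hI.eq hI'max] at hI'

lemma isCanonDecomp_of_finite (h0 : (V.notMultiInterior E).Finite)
    (hfin : (V.maxMultiIntervals E).Finite)
    (hmax : ∀ e ∈ E \ V.notMultiInterior E, ∃ I, V.IsMaxMultiInterval E e I) :
    V.IsCanonDecomp E (V.maxMultiIntervals E) (V.notMultiInterior E) := by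
  refine ⟨hfin, h0, fun x hx => hx.1, fun I ⟨e, _, hI⟩ i => ⟨hI.1 i, _, hI.2.1 i⟩, ?_,
    fun x hx => hx.2, fun e he => ?_, fun I hI => hI⟩
  · refine Set.Subset.antisymm (fun x hx => ?_)
      (Set.union_subset (Set.iUnion₂_subset fun I ⟨_, _, hI⟩ => hI.2.2.1) fun x hx => hx.1)
    by_cases hx0 : x ∈ V.notMultiInterior E
    · exact Or.inr hx0
    · obtain ⟨I, hI⟩ := hmax x ⟨hx, hx0⟩
      exact Or.inl (Set.mem_biUnion ⟨x, ⟨hx, hx0⟩, hI⟩ (Set.mem_iInter.2 hI.2.1))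
  · obtain ⟨I, hI⟩ := hmax e he
    exact ⟨I, ⟨e, he, hI⟩, hI⟩

lemma BIC.isCanonDecomp_maxMultiIntervals (hn : 1 ≤ n) (hA : A.Finite) (hE : V.BIC A E) :
    V.IsCanonDecomp E (V.maxMultiIntervals E) (V.notMultiInterior E) ∧
      ∀ I ∈ V.maxMultiIntervals E, ∀ i, EndpointsIn (I i) (V.genSort A i) := by
  have hex : ∀ e ∈ E \ V.notMultiInterior E, ∃ I, V.IsMaxMultiInterval E e I ∧
      ∀ i, I i ∈ extIoos (V.genSort A i) :=
    fun e he => hE.exists_isMaxMultiInterval hn hA (not_not.1 fun h => he.2 ⟨he.1, h⟩)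
  have hgen : ∀ I ∈ V.maxMultiIntervals E, ∀ i, I i ∈ extIoos (V.genSort A i) := by
    rintro I ⟨e, he, hI⟩
    obtain ⟨I', hI'max, hI'⟩ := hex e he
    rwa [hI.eq hI'max]
  have hfin : (V.maxMultiIntervals E).Finite :=
    (Set.Finite.pi fun i => extIoos_finite (V.genSort_finite hA i)).subset
      fun I hI => Set.mem_univ_pi.2 (hgen I hI)
  refine ⟨isCanonDecomp_of_finite (hE.notMultiInterior_finite hn hA) hfin
    fun e he => (hex e he).imp fun _ => And.left, fun I hI i =>
    endpointsIn_of_mem_extIoos (hgen I hI i) (hI.elim fun _ he => ⟨_, he.2.2.1 i⟩)⟩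

end VO

/-- Existence and uniqueness of the canonical decomposition: a basic-interval
combination `E ⊆ M₀` presented over a finite set `A` admits a canonical decomposition
`E = ⋃_{I ∈ 𝓘} (⋂ i, fᵢ⁻¹(I i)) ∪ E₀` whose intervals have their finite endpoints in `⟨A⟩`,
and any two canonical decompositions of `E` coincide. -/
theorem VO.canonDecomp_exists_unique {n : ℕ} (hn : 1 ≤ n)
    {M0 : Type u} {M : Fin n → Type u} [∀ i, LinearOrder (M i)]
    (V : VO n M0 M) (A : Set (M0 ⊕ Sigma M)) (hA : A.Finite)
    (E : Set M0) (hE : V.BIC A E) :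
    (∃ (𝓘 : Set (∀ i, Set (M i))) (E0 : Set M0), V.IsCanonDecomp E 𝓘 E0 ∧
      ∀ I ∈ 𝓘, ∀ i, EndpointsIn (I i) {x : M i | V.gen A (Sum.inr ⟨i, x⟩)}) ∧
    (∀ (𝓘 𝓘' : Set (∀ i, Set (M i))) (E0 E0' : Set M0),
      V.IsCanonDecomp E 𝓘 E0 → V.IsCanonDecomp E 𝓘' E0' → E0 = E0' ∧ 𝓘 = 𝓘') := by
  obtain ⟨hdecomp, hend⟩ := hE.isCanonDecomp_maxMultiIntervals hn hA
  refine ⟨⟨_, _, hdecomp, hend⟩, fun 𝓘 𝓘' E0 E0' h h' => ⟨?_, ?_⟩⟩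
  · rw [h.eq_notMultiInterior, h'.eq_notMultiInterior]
  · rw [h.eq_maxMultiIntervals, h'.eq_maxMultiIntervals]
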